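/- arXiv:2209.14376 — 2 statements merged into one kernel-verified Lean document; each statement's English description precedes it below -/
import Mathlib

section
/- Suppose dist takes values in the nonnegative integers with dist(i,i) = 0 for all i, and A_c is a real matrix (partitioned into the agents' blocks) such that [A_c]_{ij} = 0 whenever dist(i,j) > 1. Then for every Δt > 0 and all i,j ∈ [N], ‖[exp(Δt·A_c)]_{ij}‖ ≤ e^{Δt·‖A_c‖}·(Δt·‖A_c‖)^{dist(i,j)}; equivalently, when Δt·‖A_c‖ < 1 the matrix exp(Δt·A_c) is (e^{Δt·‖A_c‖}, −ln(Δt·‖A_c‖))-SED. -/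
open scoped Matrix.Norms.L2Operator
open Matrix

noncomputable section

/-- Index type of a vector partitioned into `N` agent blocks of sizes `d`. -/
abbrev BIdx {N : ℕ} (d : Fin N → ℕ) : Type := (i : Fin N) × Fin (d i)

/-- The `(i,j)` agent block of a block-partitioned matrix. -/
def blk {N : ℕ} {d e : Fin N → ℕ} (X : Matrix (BIdx d) (BIdx e) ℝ) (i j : Fin N) :
    Matrix (Fin (d i)) (Fin (e j)) ℝ :=
  Matrix.of fun a b => X ⟨i, a⟩ ⟨j, b⟩

/-- `X` is `(c, γ)`-spatially exponentially decaying w.r.t. `dist`: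
`‖[X]_{ij}‖ ≤ c e^{-γ dist(i,j)}` for all agents `i, j`. -/
def IsSED {N : ℕ} {d e : Fin N → ℕ} (dist : Fin N → Fin N → ℝ) (c γ : ℝ)
    (X : Matrix (BIdx d) (BIdx e) ℝ) : Prop :=
  ∀ i j : Fin N, ‖blk X i j‖ ≤ c * Real.exp (-γ * dist i j)

/-- `dist` is nonnegative, symmetric, and satisfies the triangle inequality. -/
structure IsDist {N : ℕ} (dist : Fin N → Fin N → ℝ) : Prop where
  nonneg : ∀ i j, 0 ≤ dist i j
  symm : ∀ i j, dist i j = dist j i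
  triangle : ∀ i j k, dist i j ≤ dist i k + dist k j

/-- `A` is `(τ, e^{-ρ})`-stable: `‖A^k‖ ≤ τ e^{-ρ k}` for every `k ≥ 0`. -/
def IsExpStable {n : Type*} [Fintype n] [DecidableEq n] (τ ρ : ℝ)
    (A : Matrix n n ℝ) : Prop :=
  ∀ k : ℕ, ‖A ^ k‖ ≤ τ * Real.exp (-ρ * (k : ℝ))

/-- Smallest eigenvalue of a symmetric matrix, characterized via the Loewner order. -/
def eigMin {n : Type*} [Fintype n] [DecidableEq n] (A : Matrix n n ℝ) : ℝ :=
  sSup {t : ℝ | (A - t • (1 : Matrix n n ℝ)).PosSemidef}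

/-- Largest eigenvalue of a symmetric matrix, characterized via the Loewner order. -/
def eigMax {n : Type*} [Fintype n] [DecidableEq n] (A : Matrix n n ℝ) : ℝ :=
  sInf {t : ℝ | (t • (1 : Matrix n n ℝ) - A).PosSemidef}

/-- `G = ∑_{t=0}^∞ (A^t)ᵀ Q A^t`. -/
def Gmat {ιx : Type*} [Fintype ιx] [DecidableEq ιx] (A Q : Matrix ιx ιx ℝ) :
    Matrix ιx ιx ℝ :=
  ∑' t : ℕ, (A ^ t)ᵀ * Q * (A ^ t)

section LQRDefs

variable {ιx ιu : Type*} [Fintype ιx] [DecidableEq ιx] [Fintype ιu] [DecidableEq ιu]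

/-- The `(k,m)` block of `M^{(H)}` (blocks indexed by `1 ≤ k, m ≤ H`). -/
def Mblk (A : Matrix ιx ιx ℝ) (B : Matrix ιx ιu ℝ) (Q : Matrix ιx ιx ℝ)
    (R : Matrix ιu ιu ℝ) (S : Matrix ιu ιx ℝ) (k m : ℕ) : Matrix ιu ιu ℝ :=
  if k = m then Bᵀ * Gmat A Q * B + R
  else if m < k then Bᵀ * Gmat A Q * A ^ (k - m) * B + S * A ^ (k - m - 1) * B
  else Bᵀ * (A ^ (m - k))ᵀ * Gmat A Q * B + Bᵀ * (A ^ (m - k - 1))ᵀ * Sᵀ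

/-- The `k`-th block of `J^{(H)}` (blocks indexed by `1 ≤ k ≤ H`). -/
def Jblk (A : Matrix ιx ιx ℝ) (B : Matrix ιx ιu ℝ) (Q : Matrix ιx ιx ℝ)
    (S : Matrix ιu ιx ℝ) (k : ℕ) : Matrix ιu ιx ℝ :=
  Bᵀ * Gmat A Q * A ^ k + S * A ^ (k - 1)

/-- The `H × H` block matrix `M^{(H)}`. -/
def MH (H : ℕ) (A : Matrix ιx ιx ℝ) (B : Matrix ιx ιu ℝ) (Q : Matrix ιx ιx ℝ)
    (R : Matrix ιu ιu ℝ) (S : Matrix ιu ιx ℝ) :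
    Matrix (Fin H × ιu) (Fin H × ιu) ℝ :=
  Matrix.of fun p q => Mblk A B Q R S ((p.1 : ℕ) + 1) ((q.1 : ℕ) + 1) p.2 q.2

/-- The `H × 1` block matrix `J^{(H)}`. -/
def JH (H : ℕ) (A : Matrix ιx ιx ℝ) (B : Matrix ιx ιu ℝ) (Q : Matrix ιx ιx ℝ)
    (S : Matrix ιu ιx ℝ) : Matrix (Fin H × ιu) ιx ℝ :=
  Matrix.of fun p b => Jblk A B Q S ((p.1 : ℕ) + 1) p.2 b

/-- `L^{(H)} = -(M^{(H)})⁻¹ J^{(H)}`. -/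
def LH (H : ℕ) (A : Matrix ιx ιx ℝ) (B : Matrix ιx ιu ℝ) (Q : Matrix ιx ιx ℝ)
    (R : Matrix ιu ιu ℝ) (S : Matrix ιu ιx ℝ) : Matrix (Fin H × ιu) ιx ℝ :=
  -(MH H A B Q R S)⁻¹ * JH H A B Q S

/-- The `k`-th block `L_k^{(H)}` of `L^{(H)}` (0-based index `k : Fin H` is block `k+1`). -/
def LHblk (H : ℕ) (A : Matrix ιx ιx ℝ) (B : Matrix ιx ιu ℝ) (Q : Matrix ιx ιx ℝ)
    (R : Matrix ιu ιu ℝ) (S : Matrix ιu ιx ℝ) (k : Fin H) : Matrix ιu ιx ℝ :=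
  Matrix.of fun a b => LH H A B Q R S (k, a) b

/-- `P` solves the discrete algebraic Riccati equation. -/
def IsDARE (A : Matrix ιx ιx ℝ) (B : Matrix ιx ιu ℝ) (Q : Matrix ιx ιx ℝ)
    (R : Matrix ιu ιu ℝ) (S : Matrix ιu ιx ℝ) (P : Matrix ιx ιx ℝ) : Prop :=
  P = Aᵀ * P * A - (Aᵀ * P * B + Sᵀ) * (R + Bᵀ * P * B)⁻¹ * (Bᵀ * P * A + S) + Q

/-- The optimal LQR state-feedback gain `K = (R + BᵀPB)⁻¹(BᵀPA + S)`. -/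
def optGain (A : Matrix ιx ιx ℝ) (B : Matrix ιx ιu ℝ)
    (R : Matrix ιu ιu ℝ) (S : Matrix ιu ιx ℝ) (P : Matrix ιx ιx ℝ) : Matrix ιu ιx ℝ :=
  (R + Bᵀ * P * B)⁻¹ * (Bᵀ * P * A + S)

end LQRDefs

/-- The constant `c_M`. -/
def cMconst (N : ℕ) (τ ρ b q r s nQ nS : ℝ) : ℝ :=
  b ^ 2 * (N : ℝ) ^ 2 * (τ ^ 2 * nQ / (1 - Real.exp (-(2 * ρ))) + 2 * q)
    + b * (N : ℝ) * (s + τ * nS) + r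

/-- The constant `c_J`. -/
def cJconst (N : ℕ) (τ ρ b q s nQ nS : ℝ) : ℝ :=
  b * (N : ℝ) * (τ ^ 2 * nQ / (1 - Real.exp (-(2 * ρ))) + 2 * q) + s + τ * nS

/-- The constant `c_K` of the open-loop-stable spatial-decay theorem. -/
def cKconst (N : ℕ) (τ ρ b q s nB nQ nS nK lmin : ℝ) : ℝ :=
  2 * τ ^ 3 * (nB ^ 2 * nK * nQ + nB * nK * nS)
      / ((1 - Real.exp (-(2 * ρ))) ^ ((5 : ℝ) / 2) * lmin)
    + 2 * τ ^ 2 * (nB * nQ + nS) / ((1 - Real.exp (-(2 * ρ))) ^ 2 * lmin)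
    + 2 * cJconst N τ ρ b q s nQ nS

/-- The constant `γ_K` of the open-loop-stable spatial-decay theorem. -/
def gammaKconst (N : ℕ) (γ τ ρ a b q r s nB nQ nS lmin lmaxR : ℝ) : ℝ :=
  (γ * ρ * lmin / (ρ + Real.log (a * (N : ℝ)))) *
    (1 / ((lmaxR + 4 * τ ^ 2 * (nB ^ 2 * nQ + nB * nS)
          / (1 - Real.exp (-(2 * ρ))) ^ 2) *
        Real.log (γ * cMconst N τ ρ b q r s nQ nS * (N : ℝ) ^ 2
          + cMconst N τ ρ b q r s nQ nS * (N : ℝ) + 1) + lmin))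

open scoped Nat

/-! If `A` only couples agents at distance at most `1`, then by the triangle inequality `A ^ k`
only couples agents at distance at most `k`. Hence the block `[exp (Δt • A)]_{ij}` is the tail
`∑_{k ≥ dist i j} [(Δt • A) ^ k]_{ij} / k!` of the exponential series. A block has operator norm
at most that of the whole matrix, and `∑_{k ≥ D} x ^ k / k! ≤ x ^ D e ^ x`. -/

lemma norm_tsum_le_exp_mul_pow {E : Type*} [NormedAddCommGroup E] [CompleteSpace E]
    {f : ℕ → E} {x : ℝ} {D : ℕ} (hzero : ∀ k < D, f k = 0) (hle : ∀ k, ‖f k‖ ≤ x ^ k / k !) :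
    ‖∑' k, f k‖ ≤ Real.exp x * x ^ D := by
  have hx : 0 ≤ x := by simpa using (norm_nonneg _).trans (hle 1)
  have htail : ∀ m, ‖f (m + D)‖ ≤ x ^ m / m ! * x ^ D := fun m =>
    calc ‖f (m + D)‖ ≤ x ^ (m + D) / (m + D)! := hle _
      _ ≤ x ^ (m + D) / m ! := by
          gcongr x ^ (m + D) / ?_
          exact_mod_cast Nat.factorial_le (Nat.le_add_right m D)
      _ = x ^ m / m ! * x ^ D := by ring
  have hmaj : Summable fun m => x ^ m / m ! * x ^ D :=
    (Real.summable_pow_div_factorial x).mul_right _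
  have htail_sum : Summable fun m => ‖f (m + D)‖ :=
    hmaj.of_nonneg_of_le (fun _ => norm_nonneg _) htail
  have hf : Summable f := (summable_nat_add_iff D).mp htail_sum.of_norm
  calc ‖∑' k, f k‖ = ‖∑' m, f (m + D)‖ := by
        rw [← hf.sum_add_tsum_nat_add D,
          Finset.sum_eq_zero fun k hk => hzero k (Finset.mem_range.mp hk), zero_add]
    _ ≤ ∑' m, ‖f (m + D)‖ := norm_tsum_le_tsum_norm htail_sum
    _ ≤ ∑' m, x ^ m / m ! * x ^ D := htail_sum.tsum_le_tsum htail hmaj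
    _ = Real.exp x * x ^ D := by
        rw [tsum_mul_right, Real.exp_eq_exp_ℝ, (NormedSpace.expSeries_div_hasSum_exp x).tsum_eq]

-- At `x = 0` the right side is `1`, since `Real.log 0 = 0`.
lemma pow_le_exp_log_mul {x : ℝ} (hx : 0 ≤ x) (n : ℕ) : x ^ n ≤ Real.exp (Real.log x * n) := by
  rcases hx.eq_or_lt with rfl | hx
  · simpa using pow_le_one₀ le_rfl zero_le_one
  · rw [← Real.rpow_natCast, Real.rpow_def_of_pos hx]

namespace Matrix

variable {𝕜 : Type*} [RCLike 𝕜] {l m n o : Type*} [Fintype l] [Fintype m] [Fintype n] [Fintype o]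

lemma l2_opNorm_one_le [DecidableEq n] : ‖(1 : Matrix n n 𝕜)‖ ≤ 1 := by
  rw [cstar_norm_def, map_one]
  exact ContinuousLinearMap.norm_id_le

lemma l2_opNorm_pow_le [DecidableEq n] (M : Matrix n n 𝕜) : ∀ k : ℕ, ‖M ^ k‖ ≤ ‖M‖ ^ k
  | 0 => by simpa using l2_opNorm_one_le
  | k + 1 => norm_pow_le' M k.succ_pos

lemma l2_opNorm_one_submatrix_le [DecidableEq l] [DecidableEq m] {e : l → m}
    (he : Function.Injective e) : ‖(1 : Matrix m m 𝕜).submatrix e id‖ ≤ 1 := by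
  set P := (1 : Matrix m m 𝕜).submatrix e id
  have hP : P * Pᴴ = 1 := by
    rw [conjTranspose_submatrix, conjTranspose_one, ← Equiv.coe_refl, mul_submatrix_one]
    simpa [P] using submatrix_one e he
  have : ‖P‖ * ‖P‖ ≤ 1 := by
    calc ‖P‖ * ‖P‖ = ‖Pᴴᴴ * Pᴴ‖ := by
          rw [l2_opNorm_conjTranspose_mul_self, l2_opNorm_conjTranspose]
      _ ≤ 1 := by rw [conjTranspose_conjTranspose, hP]; exact l2_opNorm_one_le
  nlinarith [norm_nonneg P]

lemma l2_opNorm_submatrix_le [DecidableEq l] [DecidableEq m] [DecidableEq n] [DecidableEq o]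
    (A : Matrix m n 𝕜) {e : l → m} {f : o → n}
    (he : Function.Injective e) (hf : Function.Injective f) : ‖A.submatrix e f‖ ≤ ‖A‖ := by
  have hfac : A.submatrix e f =
      (1 : Matrix m m 𝕜).submatrix e id * A * ((1 : Matrix n n 𝕜).submatrix f id)ᴴ := by
    ext a b
    simp [mul_apply, one_apply]
  calc ‖A.submatrix e f‖
      ≤ ‖(1 : Matrix m m 𝕜).submatrix e id‖ * ‖A‖ * ‖((1 : Matrix n n 𝕜).submatrix f id)ᴴ‖ := by
        rw [hfac]
        exact (l2_opNorm_mul _ _).trans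
          (mul_le_mul_of_nonneg_right (l2_opNorm_mul _ _) (norm_nonneg _))
    _ ≤ 1 * ‖A‖ * 1 := by
        rw [l2_opNorm_conjTranspose]
        gcongr
        · exact l2_opNorm_one_submatrix_le he
        · exact l2_opNorm_one_submatrix_le hf
    _ = ‖A‖ := by ring

end Matrix

section Blocks

variable {N : ℕ} {d e f : Fin N → ℕ}

lemma norm_blk_le (X : Matrix (BIdx d) (BIdx e) ℝ) (i j : Fin N) : ‖blk X i j‖ ≤ ‖X‖ :=
  X.l2_opNorm_submatrix_le sigma_mk_injective sigma_mk_injective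

lemma blk_tsum {g : ℕ → Matrix (BIdx d) (BIdx e) ℝ} (hg : Summable g) (i j : Fin N) :
    blk (∑' k, g k) i j = ∑' k, blk (g k) i j :=
  hg.map_tsum (AddMonoidHom.mk' (fun X => blk X i j) fun _ _ => rfl)
    (continuous_id.matrix_submatrix _ _)

lemma blk_exp (M : Matrix (BIdx d) (BIdx d) ℝ) (i j : Fin N) :
    blk (NormedSpace.exp M) i j = ∑' k, (k ! : ℝ)⁻¹ • blk (M ^ k) i j := by
  rw [NormedSpace.exp_eq_tsum ℝ]
  exact blk_tsum (NormedSpace.expSeries_summable' M) i j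

lemma norm_blk_exp_le (M : Matrix (BIdx d) (BIdx d) ℝ) {i j : Fin N} {D : ℕ}
    (h : ∀ k < D, blk (M ^ k) i j = 0) :
    ‖blk (NormedSpace.exp M) i j‖ ≤ Real.exp ‖M‖ * ‖M‖ ^ D := by
  rw [blk_exp]
  refine norm_tsum_le_exp_mul_pow (fun k hk => by rw [h k hk, smul_zero]) fun k => ?_
  rw [norm_smul, norm_inv, Real.norm_natCast, inv_mul_eq_div]
  gcongr
  exact (norm_blk_le _ i j).trans (M.l2_opNorm_pow_le k)

def IsBanded (dist : Fin N → Fin N → ℕ) (r : ℕ) (X : Matrix (BIdx d) (BIdx e) ℝ) : Prop :=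
  ∀ i j, r < dist i j → blk X i j = 0

variable {dist : Fin N → Fin N → ℕ}

lemma isBanded_one (hdiag : ∀ i, dist i i = 0) :
    IsBanded dist 0 (1 : Matrix (BIdx d) (BIdx d) ℝ) := by
  intro i j hij
  have hne : i ≠ j := by rintro rfl; simp [hdiag] at hij
  ext a b
  simp [blk, one_apply, hne]

lemma IsBanded.smul {r : ℕ} {X : Matrix (BIdx d) (BIdx e) ℝ} (hX : IsBanded dist r X) (c : ℝ) :
    IsBanded dist r (c • X) := by
  intro i j hij
  ext a b
  simpa [blk] using congrArg (c • · a b) (hX i j hij)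

lemma IsBanded.mul (htri : ∀ i j k, dist i j ≤ dist i k + dist k j) {r s : ℕ}
    {X : Matrix (BIdx d) (BIdx e) ℝ} {Y : Matrix (BIdx e) (BIdx f) ℝ}
    (hX : IsBanded dist r X) (hY : IsBanded dist s Y) : IsBanded dist (r + s) (X * Y) := by
  intro i j hij
  ext a b
  refine Finset.sum_eq_zero fun ⟨k, c⟩ _ => ?_
  by_cases hik : r < dist i k
  · simp [show X ⟨i, a⟩ ⟨k, c⟩ = 0 from congrFun (congrFun (hX i k hik) a) c]
  · have hkj : s < dist k j := by have := htri i j k; omega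
    simp [show Y ⟨k, c⟩ ⟨j, b⟩ = 0 from congrFun (congrFun (hY k j hkj) c) b]

lemma IsBanded.pow (hdiag : ∀ i, dist i i = 0) (htri : ∀ i j k, dist i j ≤ dist i k + dist k j)
    {A : Matrix (BIdx d) (BIdx d) ℝ} (hA : IsBanded dist 1 A) : ∀ k : ℕ, IsBanded dist k (A ^ k)
  | 0 => by simpa using isBanded_one hdiag
  | k + 1 => by simpa [pow_succ] using (hA.pow hdiag htri k).mul htri hA

end Blocks

theorem matrix_exp_SED_general
    {N : ℕ} {d : Fin N → ℕ}
    (dist : Fin N → Fin N → ℕ) (hdist : IsDist fun i j => (dist i j : ℝ))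
    (hdiag : ∀ i, dist i i = 0)
    (Ac : Matrix (BIdx d) (BIdx d) ℝ)
    (hsparse : ∀ i j, 1 < dist i j → blk Ac i j = 0)
    (Δt : ℝ) (hΔt : 0 < Δt) :
    (∀ i j, ‖blk (NormedSpace.exp (Δt • Ac)) i j‖
        ≤ Real.exp (Δt * ‖Ac‖) * (Δt * ‖Ac‖) ^ (dist i j)) ∧
    (Δt * ‖Ac‖ < 1 →
      IsSED (fun i j => (dist i j : ℝ)) (Real.exp (Δt * ‖Ac‖)) (-Real.log (Δt * ‖Ac‖))
        (NormedSpace.exp (Δt • Ac))) := by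
  have htri : ∀ i j k, dist i j ≤ dist i k + dist k j := fun i j k => by
    exact_mod_cast hdist.triangle i j k
  have hband : IsBanded dist 1 (Δt • Ac) := IsBanded.smul hsparse Δt
  have hnorm : ‖Δt • Ac‖ = Δt * ‖Ac‖ := by rw [norm_smul, Real.norm_of_nonneg hΔt.le]
  have hblock : ∀ i j, ‖blk (NormedSpace.exp (Δt • Ac)) i j‖
      ≤ Real.exp (Δt * ‖Ac‖) * (Δt * ‖Ac‖) ^ (dist i j) := fun i j => by
    rw [← hnorm]
    exact norm_blk_exp_le _ fun k hk => hband.pow hdiag htri k i j hk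
  refine ⟨hblock, fun _ i j => (hblock i j).trans ?_⟩
  rw [neg_neg]
  gcongr
  exact pow_le_exp_log_mul (by positivity) _

/-- Proposition: the matrix exponential of a 1-hop sparse matrix is SED. -/
theorem matrix_exp_SED
    {N : ℕ} (hN : 1 ≤ N) {d : Fin N → ℕ}
    (dist : Fin N → Fin N → ℕ) (hdist : IsDist fun i j => (dist i j : ℝ))
    (hdiag : ∀ i, dist i i = 0)
    (Ac : Matrix (BIdx d) (BIdx d) ℝ)
    (hsparse : ∀ i j, 1 < dist i j → blk Ac i j = 0)
    (Δt : ℝ) (hΔt : 0 < Δt) :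
    (∀ i j, ‖blk (NormedSpace.exp (Δt • Ac)) i j‖
        ≤ Real.exp (Δt * ‖Ac‖) * (Δt * ‖Ac‖) ^ (dist i j)) ∧
    (Δt * ‖Ac‖ < 1 →
      IsSED (fun i j => (dist i j : ℝ)) (Real.exp (Δt * ‖Ac‖)) (-Real.log (Δt * ‖Ac‖))
        (NormedSpace.exp (Δt • Ac))) :=
  matrix_exp_SED_general dist hdist hdiag Ac hsparse Δt hΔt
end
end

section
/- Let H ≥ 1 and let M be an H×H block matrix with blocks M_{km} ∈ ℝ^{n_u×n_u} and J an H×1 block matrix with blocks J_k ∈ ℝ^{n_u×n_x}, such that every M_{km} is (c_M,γ_M)-SED with c_M ≥ 1 and every J_k is (c_J,γ_M)-SED with c_J > 0; let λ_max ≥ 1 be a real number. Define L^1 := −J/λ_max and recursively L^{t+1} := (I − M/λ_max)·L^t − J/λ_max for t ≥ 1. Then for every integer t ≥ 1 and every 1 ≤ k ≤ H, the block L^t_k ∈ ℝ^{n_u×n_x} is ((2(c_M·N·H + 1)^{t−1} − 1)·c_J, γ_M)-SED. -/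
open scoped Matrix.Norms.L2Operator
open Matrix

noncomputable section

/-!
SED matrices are closed under sums and scalar multiples, and the product of a `(c, γ)`-SED and a
`(c', γ)`-SED matrix is `(N c c', γ)`-SED, since `e^{-γ d(i,l)} e^{-γ d(l,j)} ≤ e^{-γ d(i,j)}` by
the triangle inequality. Hence if every block `L^t_m` is `(c_t, γ)`-SED, every `L^{t+1}_k` is
`((c_M N H + 1) c_t + c_J, γ)`-SED, and `c_t = (2 a^{t-1} - 1) c_J` with `a = c_M N H + 1 ≥ 2`
is a supersolution of this recursion.
-/

namespace Matrix

variable {l m n o κ R : Type*} [Fintype κ] [NonUnitalNonAssocSemiring R]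

theorem submatrix_mul_prod {γ : Type*} [Fintype γ] (A : Matrix l (κ × γ) R)
    (B : Matrix (κ × γ) m R) (r : n → l) (c : o → m) :
    (A * B).submatrix r c = ∑ k, A.submatrix r (Prod.mk k) * B.submatrix (Prod.mk k) c := by
  ext a b
  simp [mul_apply, sum_apply, Fintype.sum_prod_type]

theorem submatrix_mul_sigma {γ : κ → Type*} [∀ k, Fintype (γ k)] (A : Matrix l (Σ k, γ k) R)
    (B : Matrix (Σ k, γ k) m R) (r : n → l) (c : o → m) :
    (A * B).submatrix r c = ∑ k, A.submatrix r (Sigma.mk k) * B.submatrix (Sigma.mk k) c := by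
  ext a b
  simp [mul_apply, sum_apply, Fintype.sum_sigma]

end Matrix

theorem blk_mul {N : ℕ} {d e f : Fin N → ℕ} (X : Matrix (BIdx d) (BIdx e) ℝ)
    (Y : Matrix (BIdx e) (BIdx f) ℝ) (i j : Fin N) :
    blk (X * Y) i j = ∑ l, blk X i l * blk Y l j :=
  Matrix.submatrix_mul_sigma X Y (Sigma.mk i) (Sigma.mk j)

theorem IsDist.exp_mul_exp_le {N : ℕ} {dist : Fin N → Fin N → ℝ} (hd : IsDist dist)
    {γ : ℝ} (hγ : 0 ≤ γ) (i l j : Fin N) :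
    Real.exp (-γ * dist i l) * Real.exp (-γ * dist l j) ≤ Real.exp (-γ * dist i j) := by
  rw [← Real.exp_add, Real.exp_le_exp]
  nlinarith [mul_le_mul_of_nonneg_left (hd.triangle i j l) hγ]

namespace IsSED

variable {N : ℕ} {d e f : Fin N → ℕ} {dist : Fin N → Fin N → ℝ} {c c' γ : ℝ}
  {X Y : Matrix (BIdx d) (BIdx e) ℝ}

theorem nonneg (hX : IsSED dist c γ X) (i j : Fin N) : 0 ≤ c :=
  nonneg_of_mul_nonneg_left ((norm_nonneg _).trans (hX i j)) (Real.exp_pos _)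

theorem mono (hX : IsSED dist c γ X) (hc : c ≤ c') : IsSED dist c' γ X := fun i j =>
  (hX i j).trans (mul_le_mul_of_nonneg_right hc (Real.exp_pos _).le)

theorem neg (hX : IsSED dist c γ X) : IsSED dist c γ (-X) := fun i j =>
  (norm_neg (blk X i j)).trans_le (hX i j)

theorem smul (hX : IsSED dist c γ X) (r : ℝ) : IsSED dist (|r| * c) γ (r • X) := fun i j => by
  change ‖r • blk X i j‖ ≤ _
  rw [norm_smul, Real.norm_eq_abs, mul_assoc]
  exact mul_le_mul_of_nonneg_left (hX i j) (abs_nonneg r)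

theorem add (hX : IsSED dist c γ X) (hY : IsSED dist c' γ Y) :
    IsSED dist (c + c') γ (X + Y) := fun i j =>
  (norm_add_le (blk X i j) (blk Y i j)).trans (by linarith [hX i j, hY i j])

theorem sub (hX : IsSED dist c γ X) (hY : IsSED dist c' γ Y) :
    IsSED dist (c + c') γ (X - Y) := by
  simpa only [sub_eq_add_neg] using hX.add hY.neg

theorem sum {ι : Type*} (s : Finset ι) {cs : ι → ℝ} {Xs : ι → Matrix (BIdx d) (BIdx e) ℝ}
    (h : ∀ m ∈ s, IsSED dist (cs m) γ (Xs m)) : IsSED dist (∑ m ∈ s, cs m) γ (∑ m ∈ s, Xs m) := by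
  classical
  induction s using Finset.induction_on with
  | empty =>
    intro i j
    change ‖(0 : Matrix (Fin (d i)) (Fin (e j)) ℝ)‖ ≤ _
    simp
  | insert m s hm ih =>
    rw [Finset.sum_insert hm, Finset.sum_insert hm]
    exact (h m (s.mem_insert_self m)).add (ih fun m' hm' => h m' (Finset.mem_insert_of_mem hm'))

theorem mul (hd : IsDist dist) (hγ : 0 ≤ γ) {Y : Matrix (BIdx e) (BIdx f) ℝ}
    (hX : IsSED dist c γ X) (hY : IsSED dist c' γ Y) :
    IsSED dist (N * (c * c')) γ (X * Y) := by
  intro i j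
  have hterm (l : Fin N) : ‖blk X i l * blk Y l j‖ ≤ c * c' * Real.exp (-γ * dist i j) :=
    calc ‖blk X i l * blk Y l j‖ ≤ ‖blk X i l‖ * ‖blk Y l j‖ := Matrix.l2_opNorm_mul _ _
      _ ≤ (c * Real.exp (-γ * dist i l)) * (c' * Real.exp (-γ * dist l j)) :=
        mul_le_mul (hX i l) (hY l j) (norm_nonneg _) ((norm_nonneg _).trans (hX i l))
      _ = c * c' * (Real.exp (-γ * dist i l) * Real.exp (-γ * dist l j)) := by ring
      _ ≤ c * c' * Real.exp (-γ * dist i j) :=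
        mul_le_mul_of_nonneg_left (hd.exp_mul_exp_le hγ i l j)
          (mul_nonneg (hX.nonneg i l) (hY.nonneg l j))
  calc ‖blk (X * Y) i j‖ ≤ ∑ l, ‖blk X i l * blk Y l j‖ := by
        rw [blk_mul]; exact norm_sum_le _ _
    _ ≤ ∑ _l : Fin N, c * c' * Real.exp (-γ * dist i j) := Finset.sum_le_sum fun l _ => hterm l
    _ = N * (c * c') * Real.exp (-γ * dist i j) := by simp [mul_assoc]

end IsSED

theorem isSED_neumann_step {N H : ℕ} {nxd nud : Fin N → ℕ} {dist : Fin N → Fin N → ℝ}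
    (hd : IsDist dist) {γ cM cJ c s : ℝ} (hγ : 0 ≤ γ) (hcM : 0 ≤ cM) (hcJ : 0 ≤ cJ)
    (hc : 0 ≤ c) (hs0 : 0 ≤ s) (hs1 : s ≤ 1)
    {M : Matrix (Fin H × BIdx nud) (Fin H × BIdx nud) ℝ}
    {J L : Matrix (Fin H × BIdx nud) (BIdx nxd) ℝ}
    (hM : ∀ k m, IsSED dist cM γ (M.submatrix (Prod.mk k) (Prod.mk m)))
    (hJ : ∀ k, IsSED dist cJ γ (J.submatrix (Prod.mk k) id))
    (hL : ∀ k, IsSED dist c γ (L.submatrix (Prod.mk k) id)) (k : Fin H) :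
    IsSED dist ((cM * N * H + 1) * c + cJ) γ
      (((1 - s • M) * L - s • J).submatrix (Prod.mk k) id) := by
  have hML : IsSED dist (∑ _m : Fin H, N * (cM * c)) γ ((M * L).submatrix (Prod.mk k) id) := by
    rw [Matrix.submatrix_mul_prod]
    exact IsSED.sum _ fun m _ => (hM k m).mul hd hγ (hL m)
  have hexpand : ((1 - s • M) * L - s • J).submatrix (Prod.mk k) id
      = L.submatrix (Prod.mk k) id - s • (M * L).submatrix (Prod.mk k) id
        - s • J.submatrix (Prod.mk k) id := by
    rw [Matrix.sub_mul, Matrix.one_mul, Matrix.smul_mul]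
    rfl
  rw [hexpand]
  refine (((hL k).sub (hML.smul s)).sub ((hJ k).smul s)).mono ?_
  simp only [Finset.sum_const, Finset.card_univ, Fintype.card_fin, nsmul_eq_mul,
    abs_of_nonneg hs0]
  have hML_le : s * (H * (N * (cM * c))) ≤ H * (N * (cM * c)) :=
    mul_le_of_le_one_left (by positivity) hs1
  have hJ_le : s * cJ ≤ cJ := mul_le_of_le_one_left hcJ hs1
  linarith

theorem two_mul_pow_sub_one_mul_step {a c : ℝ} (ha : 2 ≤ a) (hc : 0 ≤ c) (n : ℕ) :
    a * ((2 * a ^ n - 1) * c) + c ≤ (2 * a ^ (n + 1) - 1) * c := by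
  rw [pow_succ]
  nlinarith

theorem neumann_iterates_SED_general
    {N : ℕ} (hN : 1 ≤ N) {nxd nud : Fin N → ℕ}
    (dist : Fin N → Fin N → ℝ) (hdist : IsDist dist)
    (H : ℕ) (hH : 1 ≤ H)
    (M : Matrix (Fin H × BIdx nud) (Fin H × BIdx nud) ℝ)
    (J : Matrix (Fin H × BIdx nud) (BIdx nxd) ℝ)
    (cM cJ γM : ℝ) (hcM : 1 ≤ cM) (hcJ : 0 < cJ) (hγM : 0 < γM)
    (hMsed : ∀ k m : Fin H, IsSED dist cM γM (Matrix.of fun a b => M (k, a) (m, b)))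
    (hJsed : ∀ k : Fin H, IsSED dist cJ γM (Matrix.of fun a b => J (k, a) b))
    (lmax : ℝ) (hlmax : 1 ≤ lmax)
    (L : ℕ → Matrix (Fin H × BIdx nud) (BIdx nxd) ℝ)
    (hL1 : L 1 = -((1 / lmax) • J))
    (hrec : ∀ t : ℕ, 1 ≤ t →
      L (t + 1) = ((1 : Matrix (Fin H × BIdx nud) (Fin H × BIdx nud) ℝ)
          - (1 / lmax) • M) * L t - (1 / lmax) • J) :
    ∀ t : ℕ, 1 ≤ t → ∀ k : Fin H,
      IsSED dist ((2 * (cM * (N : ℝ) * (H : ℝ) + 1) ^ (t - 1) - 1) * cJ) γM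
        (Matrix.of fun a b => L t (k, a) b) := by
  have hs0 : 0 ≤ 1 / lmax := by positivity
  have hs1 : 1 / lmax ≤ 1 := div_le_one_of_le₀ hlmax (by positivity)
  have ha : 2 ≤ cM * N * H + 1 := by
    have : 1 ≤ cM * N * H := one_le_mul_of_one_le_of_one_le
      (one_le_mul_of_one_le_of_one_le hcM (by exact_mod_cast hN)) (by exact_mod_cast hH)
    linarith
  intro t ht
  induction t, ht using Nat.le_induction with
  | base =>
    intro k
    rw [hL1]
    refine ((hJsed k).smul _).neg.mono ?_
    rw [abs_of_nonneg hs0, Nat.sub_self, pow_zero]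
    linarith [mul_le_of_le_one_left hcJ.le hs1]
  | succ t ht ih =>
    intro k
    have hct : 0 ≤ (2 * (cM * N * H + 1) ^ (t - 1) - 1) * cJ := by
      have := one_le_pow₀ (n := t - 1) (by linarith : (1 : ℝ) ≤ cM * N * H + 1)
      nlinarith
    rw [hrec t ht, show t + 1 - 1 = t - 1 + 1 by omega]
    exact (isSED_neumann_step hdist hγM.le (by linarith) hcJ.le hct hs0 hs1 hMsed hJsed ih k).mono
      (two_mul_pow_sub_one_mul_step ha hcJ.le (t - 1))

/-- Lemma: the truncated Neumann iterates preserve the SED property,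
with SED constant growing at rate `(c_M N H + 1)^{t-1}`. -/
theorem neumann_iterates_SED
    {N : ℕ} (hN : 1 ≤ N) {nxd nud : Fin N → ℕ}
    (hnx : ∀ i, 1 ≤ nxd i) (hnu : ∀ i, 1 ≤ nud i)
    (dist : Fin N → Fin N → ℝ) (hdist : IsDist dist)
    (H : ℕ) (hH : 1 ≤ H)
    (M : Matrix (Fin H × BIdx nud) (Fin H × BIdx nud) ℝ)
    (J : Matrix (Fin H × BIdx nud) (BIdx nxd) ℝ)
    (cM cJ γM : ℝ) (hcM : 1 ≤ cM) (hcJ : 0 < cJ) (hγM : 0 < γM)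
    (hMsed : ∀ k m : Fin H, IsSED dist cM γM (Matrix.of fun a b => M (k, a) (m, b)))
    (hJsed : ∀ k : Fin H, IsSED dist cJ γM (Matrix.of fun a b => J (k, a) b))
    (lmax : ℝ) (hlmax : 1 ≤ lmax)
    (L : ℕ → Matrix (Fin H × BIdx nud) (BIdx nxd) ℝ)
    (hL1 : L 1 = -((1 / lmax) • J))
    (hrec : ∀ t : ℕ, 1 ≤ t →
      L (t + 1) = ((1 : Matrix (Fin H × BIdx nud) (Fin H × BIdx nud) ℝ)
          - (1 / lmax) • M) * L t - (1 / lmax) • J) :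
    ∀ t : ℕ, 1 ≤ t → ∀ k : Fin H,
      IsSED dist ((2 * (cM * (N : ℝ) * (H : ℝ) + 1) ^ (t - 1) - 1) * cJ) γM
        (Matrix.of fun a b => L t (k, a) b) :=
  neumann_iterates_SED_general hN dist hdist H hH M J cM cJ γM hcM hcJ hγM hMsed hJsed lmax hlmax L
    hL1 hrec
end
end
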